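/- (Case 19: additional singularities of Q_{(7:−5)}) Let b ∈ ℂ satisfy b^2 + 4b + 7 = 0. Then the point η := (3,3,3,3,b,b,b,−4−b,−4−b,−4−b) ∈ ℂ^{10} satisfies S_1(η) = 0 and there exists μ ∈ ℂ with (∂F_{7,−5}/∂x_i)(η) = μ for all i = 0,…,9; that is, η is a singular point of the hyperquintic Q_{(7:−5)} = {7·S_5 − 5·S_2·S_3 = 0} in ℙ^8(ℂ). -/

import Mathlib

/-!
Since `∂S_{k+1}/∂x_j` is `S_k` of the other nine coordinates, and `S_k(x) = S_k(x without x_j)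
+ x_j S_{k-1}(x without x_j)`, on `{S_1 = 0}` the `j`-th partial of `F_{α,β}` is the polynomial
`α t⁴ + (α + β)(S_2 t² - S_3 t) + α S_4 + β S_2²` in `t = x_j`, with coefficients that do not
depend on `j`. At `η` one has `S_2 = -21`, `S_3 = 56`, `S_4 = 210`, so for `(α:β) = (7:-5)` this is
`7 (t⁴ - 6t² - 16t + 21) - 882`, and `t⁴ - 6t² - 16t + 21 = (t - 3)(t - 1)(t² + 4t + 7)` vanishes
at every coordinate of `η`: `b` and `-4 - b` are the two roots of `t² + 4t + 7`.
-/

open MvPolynomial Finset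

namespace Multiset

variable {R : Type*} [CommSemiring R]

theorem esymm_zero (s : Multiset R) : s.esymm 0 = 1 := by
  simp [esymm]

theorem esymm_zero_succ (k : ℕ) : (0 : Multiset R).esymm (k + 1) = 0 := by
  simp [esymm, powersetCard_zero_right]

theorem esymm_cons_succ (a : R) (s : Multiset R) (k : ℕ) :
    (a ::ₘ s).esymm (k + 1) = s.esymm (k + 1) + a * s.esymm k := by
  simp [esymm, powersetCard_cons, sum_map_mul_left]

end Multiset

theorem Finset.map_val_eq_cons_erase {σ α : Type*} [DecidableEq σ] {s : Finset σ} {j : σ}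
    (f : σ → α) (h : j ∈ s) : s.val.map f = f j ::ₘ (s.erase j).val.map f := by
  rw [Finset.erase_val, ← Multiset.map_cons, Multiset.cons_erase h]

namespace MvPolynomial

variable {σ R : Type*} [CommSemiring R]

theorem eval_multiset_esymm (x : σ → R) (s : Finset σ) (k : ℕ) :
    eval x ((s.val.map X).esymm k) = (s.val.map x).esymm k := by
  simp [esymm_map_val, map_sum, map_prod]

theorem eval_esymm [Fintype σ] (x : σ → R) (k : ℕ) :
    eval x (esymm σ R k) = (univ.val.map x).esymm k := by
  rw [esymm_eq_multiset_esymm, eval_multiset_esymm]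

variable [DecidableEq σ]

theorem pderiv_prod_X_of_notMem {j : σ} {t : Finset σ} (h : j ∉ t) :
    pderiv j (∏ i ∈ t, X i : MvPolynomial σ R) = 0 := by
  induction t using Finset.induction_on with
  | empty => simp
  | insert a t ha ih =>
    rw [Finset.mem_insert, not_or] at h
    rw [prod_insert ha, pderiv_mul, pderiv_X_of_ne (Ne.symm h.1), ih h.2, zero_mul, mul_zero,
      add_zero]

theorem pderiv_multiset_esymm_of_notMem {j : σ} {s : Finset σ} (h : j ∉ s) (k : ℕ) :
    pderiv j ((s.val.map X).esymm k : MvPolynomial σ R) = 0 := by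
  rw [esymm_map_val, map_sum]
  exact sum_eq_zero fun t ht => pderiv_prod_X_of_notMem fun hj => h ((mem_powersetCard.1 ht).1 hj)

variable [Fintype σ]

theorem pderiv_esymm_succ (j : σ) (k : ℕ) :
    pderiv j (esymm σ R (k + 1)) = ((univ.erase j).val.map X).esymm k := by
  rw [esymm_eq_multiset_esymm, map_val_eq_cons_erase X (mem_univ j), Multiset.esymm_cons_succ,
    map_add, pderiv_mul, pderiv_X_self, pderiv_multiset_esymm_of_notMem (notMem_erase j _),
    pderiv_multiset_esymm_of_notMem (notMem_erase j _)]
  simp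

theorem eval_pderiv_esymm_succ (x : σ → R) (j : σ) (k : ℕ) :
    eval x (pderiv j (esymm σ R (k + 1))) = ((univ.erase j).val.map x).esymm k := by
  rw [pderiv_esymm_succ, eval_multiset_esymm]

end MvPolynomial

noncomputable def hyperquinticForm (σ : Type*) {R : Type*} [CommSemiring R] [Fintype σ]
    (α β : R) : MvPolynomial σ R :=
  C α * esymm σ R 5 + C β * (esymm σ R 2 * esymm σ R 3)

theorem eval_pderiv_hyperquinticForm {σ R : Type*} [CommRing R] [Fintype σ] [DecidableEq σ]
    (α β : R) (x : σ → R) (j : σ) (h1 : eval x (esymm σ R 1) = 0) :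
    eval x (pderiv j (hyperquinticForm σ α β)) =
      α * x j ^ 4 + (α + β) * (eval x (esymm σ R 2) * x j ^ 2 - eval x (esymm σ R 3) * x j)
        + α * eval x (esymm σ R 4) + β * eval x (esymm σ R 2) ^ 2 := by
  simp only [hyperquinticForm, map_add, pderiv_mul, pderiv_C, zero_mul, zero_add, map_mul, eval_C]
  rw [eval_pderiv_esymm_succ x j 4, eval_pderiv_esymm_succ x j 1, eval_pderiv_esymm_succ x j 2]
  simp only [eval_esymm, map_val_eq_cons_erase x (mem_univ j), Multiset.esymm_cons_succ,
    Multiset.esymm_zero] at h1 ⊢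
  have he1 : ((univ.erase j).val.map x).esymm 1 = -x j := by linear_combination h1
  rw [he1]
  ring

section Case19

variable {R : Type*} [CommRing R] {b : R}

noncomputable def case19Point (b : R) : Fin 10 → R :=
  ![3, 3, 3, 3, b, b, b, -4 - b, -4 - b, -4 - b]

theorem map_univ_val_case19Point (b : R) :
    univ.val.map (case19Point b) = ↑[3, 3, 3, 3, b, b, b, -4 - b, -4 - b, -4 - b] := by
  rw [Fin.univ_val_map]
  rfl

theorem esymm_case19Point (hb : b ^ 2 + 4 * b + 7 = 0) :
    eval (case19Point b) (esymm (Fin 10) R 1) = 0 ∧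
      eval (case19Point b) (esymm (Fin 10) R 2) = -21 ∧
      eval (case19Point b) (esymm (Fin 10) R 3) = 56 ∧
      eval (case19Point b) (esymm (Fin 10) R 4) = 210 := by
  simp only [eval_esymm, map_univ_val_case19Point, ← Multiset.cons_coe, Multiset.coe_nil,
    Multiset.esymm_cons_succ, Multiset.esymm_zero_succ, Multiset.esymm_zero]
  exact ⟨by ring, by linear_combination (-3) * hb, by linear_combination (-12) * hb,
    by linear_combination (57 + 12 * b + 3 * b ^ 2) * hb⟩

theorem case19Point_quartic (hb : b ^ 2 + 4 * b + 7 = 0) (j : Fin 10) :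
    case19Point b j ^ 4 - 6 * case19Point b j ^ 2 - 16 * case19Point b j + 21 = 0 := by
  have of_root (t : R) (ht : t ^ 2 + 4 * t + 7 = 0) : t ^ 4 - 6 * t ^ 2 - 16 * t + 21 = 0 := by
    linear_combination (t - 3) * (t - 1) * ht
  have hb' : (-4 - b) ^ 2 + 4 * (-4 - b) + 7 = 0 := by linear_combination hb
  fin_cases j
  all_goals first | exact of_root _ hb | exact of_root _ hb' | norm_num [case19Point]

end Case19

/-- **Case 19, additional singularities of `Q_{(7:−5)}`.** If `b² + 4b + 7 = 0`,
then the point `η = (3,3,3,3,b,b,b,−4−b,−4−b,−4−b)` satisfies `S₁(η) = 0` and is a singular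
point of the hyperquintic `Q_{(7:−5)} = {7·S₅ − 5·S₂·S₃ = 0}` in `ℙ⁸(ℂ)`. -/
theorem case19_additional_singularity (b : ℂ) (hb : b ^ 2 + 4 * b + 7 = 0) (η : Fin 10 → ℂ)
    (hη : η = ![3, 3, 3, 3, b, b, b, -4 - b, -4 - b, -4 - b]) :
    eval η (esymm (Fin 10) ℂ 1) = 0 ∧
    ∃ μ : ℂ, ∀ i, eval η (pderiv i
      (C (7 : ℂ) * esymm (Fin 10) ℂ 5
        + C (-5 : ℂ) * (esymm (Fin 10) ℂ 2 * esymm (Fin 10) ℂ 3))) = μ := by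
  subst hη
  obtain ⟨hS1, hS2, hS3, hS4⟩ := esymm_case19Point hb
  refine ⟨hS1, -882, fun j => ?_⟩
  refine (eval_pderiv_hyperquinticForm 7 (-5) (case19Point b) j hS1).trans ?_
  rw [hS2, hS3, hS4]
  linear_combination 7 * case19Point_quartic hb j
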